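/- Let τ ∈ S_k and σ ∈ S_n with k ≤ n. Let Z_σ be the limit permutation associated with σ (with joint density f_σ(x,y) = n·1[σ(⌈nx⌉)=⌈ny⌉]), and let t(τ,Z_σ) be the probability that k i.i.d. points drawn from this density, when sorted by horizontal coordinate, have vertical coordinates in the relative order τ. Then |t(τ,σ) − t(τ,Z_σ)| ≤ (1/n)·C(k,2). -/
import Mathlib


open MeasureTheory

/-- The number of occurrences of the pattern `τ` in the permutation `σ`. -/
noncomputable def patternCount {k n : ℕ} (τ : Equiv.Perm (Fin k)) (σ : Equiv.Perm (Fin n)) : ℕ :=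
  Nat.card {f : Fin k → Fin n // StrictMono f ∧ ∀ i j : Fin k, τ i < τ j ↔ σ (f i) < σ (f j)}

/-- The subpermutation density `t(τ,σ) = Λ(τ,σ) / C(n,k)` if `k ≤ n`, and `0` otherwise. -/
noncomputable def patternDensity {k n : ℕ} (τ : Equiv.Perm (Fin k)) (σ : Equiv.Perm (Fin n)) : ℝ :=
  if k ≤ n then (patternCount τ σ : ℝ) / (n.choose k : ℝ) else 0

/-- The density `f_σ(x,y) = n·1[σ(⌈nx⌉) = ⌈ny⌉]` on `ℝ²` associated with a permutation
`σ` of `[n]`. -/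
noncomputable def permDensityFn {n : ℕ} (σ : Equiv.Perm (Fin n)) : ℝ × ℝ → ℝ :=
  fun p => (n : ℝ) *
    Set.indicator {q : ℝ × ℝ | ∃ i : Fin n,
        ⌈(n : ℝ) * q.1⌉ = (i : ℕ) + 1 ∧ ⌈(n : ℝ) * q.2⌉ = (σ i : ℕ) + 1}
      (fun _ => (1 : ℝ)) p

/-- The limit permutation measure `Z_σ` associated with `σ`, given by the density `f_σ`. -/
noncomputable def permMeasure {n : ℕ} (σ : Equiv.Perm (Fin n)) : Measure (ℝ × ℝ) :=
  volume.withDensity fun p => ENNReal.ofReal (permDensityFn σ p)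

/-- The event that `k` points in the plane, when sorted by horizontal coordinate, have
vertical coordinates in the relative order `τ`. -/
def patternEvent {k : ℕ} (τ : Equiv.Perm (Fin k)) : Set (Fin k → ℝ × ℝ) :=
  {p | ∃ e : Equiv.Perm (Fin k), StrictMono (fun i => (p (e i)).1) ∧
        ∀ i j : Fin k, τ i < τ j ↔ (p (e i)).2 < (p (e j)).2}

/-- The probability `t(τ,μ)` that `k` i.i.d. points drawn from `μ`, sorted by
horizontal coordinate, have vertical coordinates in the relative order `τ`. -/
noncomputable def patternProb {k : ℕ} (τ : Equiv.Perm (Fin k)) (μ : Measure (ℝ × ℝ)) : ℝ :=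
  ((Measure.pi fun _ : Fin k => μ) (patternEvent τ)).toReal


open scoped ENNReal

namespace PatternAux
open Set

variable {k n : ℕ}

/-- One cell of the permutation measure. -/
def cell (σ : Equiv.Perm (Fin n)) (i : Fin n) : Set (ℝ × ℝ) :=
  Set.Ioc ((i : ℝ)/n) (((i : ℝ)+1)/n) ×ˢ Set.Ioc ((σ i : ℝ)/n) (((σ i : ℝ)+1)/n)

lemma ceil_eq_iff_mem (hn : 0 < n) (m : ℕ) (x : ℝ) :
    ⌈(n : ℝ) * x⌉ = (m : ℤ) + 1 ↔ x ∈ Set.Ioc ((m : ℝ)/n) (((m : ℝ)+1)/n) := by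
  have hn' : (0:ℝ) < n := by exact_mod_cast hn
  rw [Int.ceil_eq_iff, Set.mem_Ioc]
  constructor
  · rintro ⟨h1, h2⟩
    constructor
    · rw [div_lt_iff₀ hn']
      push_cast at h1 ⊢
      linarith
    · rw [le_div_iff₀ hn']
      push_cast at h2 ⊢
      linarith
  · rintro ⟨h1, h2⟩
    rw [div_lt_iff₀ hn'] at h1
    rw [le_div_iff₀ hn'] at h2
    constructor
    · push_cast; linarith
    · push_cast; linarith

lemma mem_cell_iff (hn : 0 < n) (σ : Equiv.Perm (Fin n)) (i : Fin n) (q : ℝ × ℝ) :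
    q ∈ cell σ i ↔ (⌈(n : ℝ) * q.1⌉ = (i : ℕ) + 1 ∧ ⌈(n : ℝ) * q.2⌉ = (σ i : ℕ) + 1) := by
  rw [cell, Set.mem_prod, ceil_eq_iff_mem hn, ceil_eq_iff_mem hn]

lemma cell_measurable (σ : Equiv.Perm (Fin n)) (i : Fin n) : MeasurableSet (cell σ i) :=
  measurableSet_Ioc.prod measurableSet_Ioc

lemma volume_cell (σ : Equiv.Perm (Fin n)) (i : Fin n) :
    volume (cell σ i) = ENNReal.ofReal (1/n) * ENNReal.ofReal (1/n) := by
  rw [cell, Measure.volume_eq_prod, Measure.prod_prod, Real.volume_Ioc, Real.volume_Ioc]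
  congr 1 <;> · congr 1; rw [div_sub_div_same]; ring_nf

lemma ofReal_permDensityFn (hn : 0 < n) (σ : Equiv.Perm (Fin n)) (p : ℝ × ℝ) :
    ENNReal.ofReal (permDensityFn σ p)
      = ∑ i : Fin n, (cell σ i).indicator (fun _ => (n : ℝ≥0∞)) p := by
  unfold permDensityFn
  by_cases h : p ∈ {q : ℝ × ℝ | ∃ i : Fin n,
      ⌈(n : ℝ) * q.1⌉ = (i : ℕ) + 1 ∧ ⌈(n : ℝ) * q.2⌉ = (σ i : ℕ) + 1}
  · rw [Set.indicator_of_mem h, mul_one]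
    obtain ⟨i, hi⟩ := h
    rw [Finset.sum_eq_single i]
    · rw [Set.indicator_of_mem ((mem_cell_iff hn σ i p).2 hi)]
      exact (ENNReal.ofReal_natCast n).symm ▸ rfl
    · intro j _ hj
      apply Set.indicator_of_notMem
      intro hmem
      rcases (mem_cell_iff hn σ j p).1 hmem with ⟨h1, _⟩
      apply hj
      have : ((j:ℕ):ℤ) = ((i:ℕ):ℤ) := by
        have := h1.symm.trans hi.1
        omega
      exact Fin.ext (by exact_mod_cast this)
    · simp
  · rw [Set.indicator_of_notMem h, mul_zero, ENNReal.ofReal_zero]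
    symm; apply Finset.sum_eq_zero; intro j _
    exact Set.indicator_of_notMem (fun hmem => h ⟨j, (mem_cell_iff hn σ j p).1 hmem⟩) _

lemma withDensity_finset_sum {α : Type*} [MeasurableSpace α] (μ : Measure α) {ι : Type*}
    (s : Finset ι) (f : ι → α → ℝ≥0∞) (hf : ∀ i, Measurable (f i)) :
    μ.withDensity (fun a => ∑ i ∈ s, f i a) = ∑ i ∈ s, μ.withDensity (f i) := by
  induction s using Finset.cons_induction with
  | empty => simp
  | cons i s his ih =>
    rw [Finset.sum_cons, ← ih]
    have : (fun a => ∑ j ∈ Finset.cons i s his, f j a) = f i + fun a => ∑ j ∈ s, f j a := by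
      funext a; simp [Finset.sum_cons]
    rw [this, withDensity_add_left (hf i)]

lemma permMeasure_eq (hn : 0 < n) (σ : Equiv.Perm (Fin n)) :
    permMeasure σ = ∑ i : Fin n, (n : ℝ≥0∞) • volume.restrict (cell σ i) := by
  unfold permMeasure
  have h1 : (fun p => ENNReal.ofReal (permDensityFn σ p))
      = fun p => ∑ i : Fin n, (cell σ i).indicator (fun _ => (n:ℝ≥0∞)) p :=
    funext (ofReal_permDensityFn hn σ)
  rw [h1, withDensity_finset_sum _ _ _
    (fun i => measurable_const.indicator (cell_measurable σ i))]
  congr 1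
  funext i
  rw [withDensity_indicator (cell_measurable σ i), withDensity_const]

lemma isFiniteMeasure_smul_restrict (σ : Equiv.Perm (Fin n)) (i : Fin n) :
    IsFiniteMeasure ((n : ℝ≥0∞) • volume.restrict (cell σ i)) := by
  constructor
  rw [Measure.smul_apply, smul_eq_mul, Measure.restrict_apply_univ, volume_cell]
  exact ENNReal.mul_lt_top (ENNReal.natCast_ne_top n).lt_top
    (ENNReal.mul_lt_top ENNReal.ofReal_ne_top.lt_top ENNReal.ofReal_ne_top.lt_top)

lemma pi_sum_expand {δ : Type*} [MeasurableSpace δ] (k n : ℕ) (ν : Fin n → Measure δ)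
    (hν : ∀ i, IsFiniteMeasure (ν i)) :
    (Measure.pi fun _ : Fin k => (∑ i : Fin n, ν i))
      = ∑ s : Fin k → Fin n, Measure.pi (fun j => ν (s j)) := by
  haveI := hν
  haveI : IsFiniteMeasure (∑ i : Fin n, ν i) := by
    constructor
    rw [Measure.finset_sum_apply]
    exact ENNReal.sum_lt_top.2 fun i _ => measure_lt_top _ _
  apply Measure.pi_eq
  intro A hA
  rw [Measure.finset_sum_apply]
  simp_rw [Measure.pi_pi]
  have : ∀ j : Fin k, (∑ i : Fin n, ν i) (A j) = ∑ i : Fin n, ν i (A j) := fun j =>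
    Measure.finset_sum_apply _ _ _
  simp_rw [this]
  rw [Finset.prod_univ_sum]
  simp

lemma pi_smul_restrict (k : ℕ) (c : ℝ≥0∞) (hc : c ≠ ⊤) (t : Fin k → Set (ℝ × ℝ))
    (ht : ∀ j, MeasurableSet (t j)) (hfin : ∀ j, volume (t j) ≠ ⊤) :
    Measure.pi (fun j : Fin k => c • volume.restrict (t j))
      = c ^ k • (Measure.pi fun _ : Fin k => (volume : Measure (ℝ × ℝ))).restrict
          (Set.pi Set.univ t) := by
  haveI : ∀ j, IsFiniteMeasure (c • volume.restrict (t j)) := fun j => by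
    constructor
    rw [Measure.smul_apply, smul_eq_mul, Measure.restrict_apply_univ]
    exact ENNReal.mul_lt_top hc.lt_top (hfin j).lt_top
  apply Measure.pi_eq
  intro A hA
  rw [Measure.smul_apply, Measure.restrict_apply (MeasurableSet.univ_pi hA),
    ← Set.pi_inter_distrib, Measure.pi_pi]
  simp_rw [Measure.smul_apply, Measure.restrict_apply (hA _), smul_eq_mul]
  rw [Finset.prod_mul_distrib, Finset.prod_const, Finset.card_univ, Fintype.card_fin]

/-- The condition on a strip assignment `s` that its induced pattern is `τ`. -/
def cond (σ : Equiv.Perm (Fin n)) (τ : Equiv.Perm (Fin k)) (s : Fin k → Fin n) : Prop :=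
  ∃ e : Equiv.Perm (Fin k), StrictMono (fun i => s (e i)) ∧
    ∀ i j, τ i < τ j ↔ σ (s (e i)) < σ (s (e j))

lemma strip_sep (hn : 0 < n) {a b : ℕ} (hab : a < b) {x y : ℝ}
    (hx : x ∈ Set.Ioc ((a:ℝ)/n) (((a:ℝ)+1)/n)) (hy : y ∈ Set.Ioc ((b:ℝ)/n) (((b:ℝ)+1)/n)) :
    x < y := by
  have hn' : (0:ℝ) < n := by exact_mod_cast hn
  have h1 : ((a:ℝ)+1) ≤ (b:ℝ) := by exact_mod_cast hab
  have h2 : ((a:ℝ)+1)/n ≤ (b:ℝ)/n := by gcongr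
  exact lt_of_le_of_lt (hx.2.trans h2) hy.1

lemma cond_injective {σ : Equiv.Perm (Fin n)} {τ : Equiv.Perm (Fin k)} {s : Fin k → Fin n}
    (h : cond σ τ s) : Function.Injective s := by
  obtain ⟨e, h1, _⟩ := h
  intro a b hab
  have : e (e.symm a) = e (e.symm b) := by
    have := h1.injective (show s (e (e.symm a)) = s (e (e.symm b)) by simpa using hab)
    simpa using congrArg e this
  simpa using this

lemma mem_event_iff (hn : 0 < n) (σ : Equiv.Perm (Fin n)) (τ : Equiv.Perm (Fin k))
    {s : Fin k → Fin n} (hs : Function.Injective s)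
    {p : Fin k → ℝ × ℝ} (hp : ∀ j, p j ∈ cell σ (s j)) :
    p ∈ patternEvent τ ↔ cond σ τ s := by
  have hx : ∀ {a b : Fin k}, s a < s b → (p a).1 < (p b).1 := fun {a b} h =>
    strip_sep hn h ((hp a).1) ((hp b).1)
  have hy : ∀ {a b : Fin k}, σ (s a) < σ (s b) → (p a).2 < (p b).2 := fun {a b} h =>
    strip_sep hn h ((hp a).2) ((hp b).2)
  constructor
  · rintro ⟨e, he1, he2⟩
    refine ⟨e, ?_, ?_⟩
    · intro i j hij
      rcases lt_trichotomy (s (e i)) (s (e j)) with h|h|h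
      · exact h
      · exact absurd (e.injective (hs h)) hij.ne
      · exact absurd (he1 hij) (lt_asymm (hx h))
    · intro i j
      rw [he2 i j]
      constructor
      · intro hyy
        rcases lt_trichotomy (σ (s (e i))) (σ (s (e j)))  with h|h|h
        · exact h
        · have hij : i = j := e.injective (hs (σ.injective h))
          subst hij
          exact absurd hyy (lt_irrefl _)
        · exact absurd hyy (lt_asymm (hy h))
      · exact hy
  · rintro ⟨e, he1, he2⟩
    refine ⟨e, ?_, ?_⟩
    · intro i j hij
      exact hx (he1 hij)
    · intro i j
      rw [he2 i j]
      constructor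
      · exact hy
      · intro hyy
        rcases lt_trichotomy (σ (s (e i))) (σ (s (e j)))  with h|h|h
        · exact h
        · have hij : i = j := e.injective (hs (σ.injective h))
          subst hij
          exact absurd hyy (lt_irrefl _)
        · exact absurd hyy (lt_asymm (hy h))

lemma measurableSet_patternEvent (τ : Equiv.Perm (Fin k)) :
    MeasurableSet (patternEvent τ) := by
  have heq : patternEvent τ = ⋃ e : Equiv.Perm (Fin k),
      ((⋂ i, ⋂ j, {p : Fin k → ℝ × ℝ | i < j → (p (e i)).1 < (p (e j)).1}) ∩
       (⋂ i, ⋂ j, {p : Fin k → ℝ × ℝ | τ i < τ j ↔ (p (e i)).2 < (p (e j)).2})) := by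
    ext p
    simp only [patternEvent, Set.mem_iUnion, Set.mem_inter_iff, Set.mem_iInter,
      Set.mem_setOf_eq]
    constructor
    · rintro ⟨e, h1, h2⟩
      exact ⟨e, fun i j hij => h1 hij, h2⟩
    · rintro ⟨e, h1, h2⟩
      exact ⟨e, fun i j hij => h1 i j hij, h2⟩
  rw [heq]
  have hm1 : ∀ (e : Equiv.Perm (Fin k)) (i : Fin k),
      Measurable fun p : Fin k → ℝ × ℝ => (p (e i)).1 :=
    fun e i => measurable_fst.comp (measurable_pi_apply (e i))
  have hm2 : ∀ (e : Equiv.Perm (Fin k)) (i : Fin k),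
      Measurable fun p : Fin k → ℝ × ℝ => (p (e i)).2 :=
    fun e i => measurable_snd.comp (measurable_pi_apply (e i))
  apply MeasurableSet.iUnion
  intro e
  apply MeasurableSet.inter
  · apply MeasurableSet.iInter; intro i
    apply MeasurableSet.iInter; intro j
    by_cases hij : i < j
    · simp only [hij, true_implies]
      exact measurableSet_lt (hm1 e i) (hm1 e j)
    · simp only [hij, false_implies, Set.setOf_true]
      exact MeasurableSet.univ
  · apply MeasurableSet.iInter; intro i
    apply MeasurableSet.iInter; intro j
    by_cases hτ : τ i < τ j
    · simp only [hτ, true_iff]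
      exact measurableSet_lt (hm2 e i) (hm2 e j)
    · simp only [hτ, false_iff]
      have : {p : Fin k → ℝ × ℝ | ¬(p (e i)).2 < (p (e j)).2}
          = {p : Fin k → ℝ × ℝ | (p (e i)).2 < (p (e j)).2}ᶜ := rfl
      rw [this]
      exact (measurableSet_lt (hm2 e i) (hm2 e j)).compl

lemma strictMono_perm_eq_one (g : Equiv.Perm (Fin k))
    (hg : StrictMono (g : Fin k → Fin k)) : ∀ i, g i = i := by
  intro i
  have h1 : StrictMono.orderIsoOfSurjective (g : Fin k → Fin k) hg g.surjective
      = OrderIso.refl (Fin k) := Subsingleton.elim _ _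
  have h2 := StrictMono.coe_orderIsoOfSurjective (g : Fin k → Fin k) hg g.surjective
  calc g i = (StrictMono.orderIsoOfSurjective (g : Fin k → Fin k) hg g.surjective) i := by
        rw [h2]
    _ = i := by rw [h1]; rfl

def condEquivFun (σ : Equiv.Perm (Fin n)) (τ : Equiv.Perm (Fin k))
    (x : {f : Fin k → Fin n // StrictMono f ∧ ∀ i j : Fin k, τ i < τ j ↔ σ (f i) < σ (f j)}
      × Equiv.Perm (Fin k)) : {s : Fin k → Fin n // cond σ τ s} :=
  ⟨x.1.1 ∘ (x.2.symm : Fin k → Fin k), by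
    refine ⟨x.2, ?_, ?_⟩
    · have : (fun i => (x.1.1 ∘ (x.2.symm : Fin k → Fin k)) (x.2 i)) = x.1.1 := by
        funext i; simp
      rw [this]; exact x.1.2.1
    · intro i j
      simpa using x.1.2.2 i j⟩

lemma card_cond (σ : Equiv.Perm (Fin n)) (τ : Equiv.Perm (Fin k)) :
    Nat.card {s : Fin k → Fin n // cond σ τ s} = patternCount τ σ * Nat.factorial k := by
  classical
  have hbij : Function.Bijective (condEquivFun σ τ) := by
    constructor
    · rintro ⟨⟨f, hf⟩, e⟩ ⟨⟨f', hf'⟩, e'⟩ h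
      have hs : f ∘ (e.symm : Fin k → Fin k) = f' ∘ (e'.symm : Fin k → Fin k) :=
        congrArg Subtype.val h
      have hfe : f = (f' ∘ (e'.symm : Fin k → Fin k)) ∘ (e : Fin k → Fin k) := by
        rw [← hs]; funext i; simp
      set g : Equiv.Perm (Fin k) := e.trans e'.symm with hg
      have hfg : f = f' ∘ (g : Fin k → Fin k) := hfe
      have hgsm : StrictMono (g : Fin k → Fin k) := by
        intro i j hij
        have : f i < f j := hf.1 hij
        rw [hfg] at this
        exact hf'.1.lt_iff_lt.mp this
      have hgid : ∀ i, g i = i := strictMono_perm_eq_one g hgsm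
      have he : e = e' := by
        apply Equiv.ext; intro i
        have := hgid i
        rw [hg] at this
        simpa [Equiv.trans_apply] using congrArg e' this
      have hff : f = f' := by
        rw [hfg]; funext i
        simp only [Function.comp_apply, hgid i]
      subst he
      apply Prod.ext
      · exact Subtype.ext hff
      · rfl
    · rintro ⟨s, hcond⟩
      obtain ⟨e, h1, h2⟩ := hcond
      refine ⟨⟨⟨fun i => s (e i), h1, h2⟩, e⟩, ?_⟩
      apply Subtype.ext
      funext i
      simp [condEquivFun]
  rw [← Nat.card_congr (Equiv.ofBijective _ hbij), Nat.card_prod, patternCount]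
  congr 1
  rw [Nat.card_eq_fintype_card, Fintype.card_perm, Fintype.card_fin]

lemma pow_mul_le_desc_add (n : ℕ) : ∀ k : ℕ,
    n ^ k * n ≤ n.descFactorial k * n + k.choose 2 * n ^ k
  | 0 => by simp
  | (k+1) => by
    have ih := pow_mul_le_desc_add n k
    have hnk : n ≤ (n - k) + k := by omega
    calc n ^ (k+1) * n = (n ^ k * n) * n := by ring
      _ ≤ (n.descFactorial k * n + k.choose 2 * n ^ k) * n := Nat.mul_le_mul_right _ ih
      _ = n.descFactorial k * n * n + k.choose 2 * n ^ (k+1) := by ring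
      _ ≤ n.descFactorial k * ((n - k) + k) * n + k.choose 2 * n ^ (k+1) := by
          have : n.descFactorial k * n * n ≤ n.descFactorial k * ((n - k) + k) * n :=
            Nat.mul_le_mul_right _ (Nat.mul_le_mul_left _ hnk)
          omega
      _ = (n - k) * n.descFactorial k * n + n.descFactorial k * k * n
            + k.choose 2 * n ^ (k+1) := by ring
      _ ≤ (n - k) * n.descFactorial k * n + n ^ k * k * n + k.choose 2 * n ^ (k+1) := by
          have : n.descFactorial k * k * n ≤ n ^ k * k * n :=
            Nat.mul_le_mul_right _ (Nat.mul_le_mul_right _ (Nat.descFactorial_le_pow n k))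
          omega
      _ = n.descFactorial (k+1) * n + (k + k.choose 2) * n ^ (k+1) := by
          rw [Nat.descFactorial_succ]; ring
      _ = n.descFactorial (k+1) * n + (k+1).choose 2 * n ^ (k+1) := by
          rw [Nat.choose_succ_succ, Nat.choose_one_right]

lemma sub_desc_mul_le (n k : ℕ) : (n ^ k - n.descFactorial k) * n ≤ k.choose 2 * n ^ k := by
  rw [Nat.sub_mul, tsub_le_iff_right]
  calc n ^ k * n ≤ n.descFactorial k * n + k.choose 2 * n ^ k := pow_mul_le_desc_add n k
    _ = k.choose 2 * n ^ k + n.descFactorial k * n := by ring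

end PatternAux

/-- For `τ ∈ S_k`, `σ ∈ S_n` with `k ≤ n`:
`|t(τ,σ) − t(τ,Z_σ)| ≤ C(k,2)/n`. -/
theorem patternDensity_close_to_patternProb
    {k n : ℕ} (hn : 0 < n) (hkn : k ≤ n)
    (τ : Equiv.Perm (Fin k)) (σ : Equiv.Perm (Fin n)) :
    |patternDensity τ σ - patternProb τ (permMeasure σ)| ≤ (k.choose 2 : ℝ) / n := by
  classical
  have hn' : (0:ℝ) < n := by exact_mod_cast hn
  have hn0 : (n : ℝ≥0∞) ≠ 0 := by exact_mod_cast hn.ne'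
  have hnt : (n : ℝ≥0∞) ≠ ⊤ := ENNReal.natCast_ne_top n
  set E := patternEvent τ with hEdef
  have hEm : MeasurableSet E := PatternAux.measurableSet_patternEvent τ
  set w : ℝ≥0∞ := ((n : ℝ≥0∞) ^ k)⁻¹ with hw
  have hwne : w ≠ ⊤ := ENNReal.inv_ne_top.2 (pow_ne_zero k hn0)
  set F : (Fin k → Fin n) → ℝ≥0∞ := fun s =>
    (Measure.pi fun j : Fin k => (n:ℝ≥0∞) • volume.restrict (PatternAux.cell σ (s j))) E
    with hF
  set M : ℝ≥0∞ := (Measure.pi fun _ : Fin k => permMeasure σ) E with hMdef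
  have hprob : patternProb τ (permMeasure σ) = M.toReal := rfl
  -- expansion of the product measure
  have hM : M = ∑ s : Fin k → Fin n, F s := by
    rw [hMdef, PatternAux.permMeasure_eq hn σ,
      PatternAux.pi_sum_expand k n _ (fun i => PatternAux.isFiniteMeasure_smul_restrict σ i),
      Measure.finset_sum_apply]
  -- per-cell computations
  have hcellvol : ∀ (i : Fin n), volume (PatternAux.cell σ i) ≠ ⊤ := fun i => by
    rw [PatternAux.volume_cell]
    exact (ENNReal.mul_lt_top ENNReal.ofReal_ne_top.lt_top ENNReal.ofReal_ne_top.lt_top).ne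
  have hterm : ∀ s : Fin k → Fin n,
      F s = (n:ℝ≥0∞)^k * (Measure.pi fun _ : Fin k => (volume : Measure (ℝ × ℝ)))
        (E ∩ Set.pi Set.univ (fun j => PatternAux.cell σ (s j))) := by
    intro s
    simp only [hF]
    rw [PatternAux.pi_smul_restrict k _ hnt _ (fun j => PatternAux.cell_measurable σ (s j))
      (fun j => hcellvol (s j)), Measure.smul_apply, Measure.restrict_apply hEm, smul_eq_mul]
  have hbox : ∀ s : Fin k → Fin n,
      (n:ℝ≥0∞)^k * (Measure.pi fun _ : Fin k => (volume : Measure (ℝ × ℝ)))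
        (Set.pi Set.univ (fun j => PatternAux.cell σ (s j))) = w := by
    intro s
    rw [Measure.pi_pi]
    have h0 : ∀ j : Fin k, volume (PatternAux.cell σ (s j))
        = ENNReal.ofReal (1/(n:ℝ)) * ENNReal.ofReal (1/(n:ℝ)) := fun j =>
      PatternAux.volume_cell σ (s j)
    simp_rw [h0]
    rw [Finset.prod_const, Finset.card_univ, Fintype.card_fin]
    have h1 : ENNReal.ofReal (1/(n:ℝ)) = (n:ℝ≥0∞)⁻¹ := by
      rw [one_div, ENNReal.ofReal_inv_of_pos hn', ENNReal.ofReal_natCast]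
    rw [h1, ← mul_pow, ← mul_assoc, ENNReal.mul_inv_cancel hn0 hnt, one_mul, hw,
      ← ENNReal.inv_pow]
  -- upper bound for each term
  have hub : ∀ s : Fin k → Fin n, F s ≤ w := by
    intro s
    rw [hterm s, ← hbox s]
    exact mul_le_mul_right (measure_mono Set.inter_subset_right) _
  -- value when the pattern condition holds
  have hcond_val : ∀ s : Fin k → Fin n, PatternAux.cond σ τ s → F s = w := by
    intro s hc
    rw [hterm s, ← hbox s]
    congr 2
    apply Set.inter_eq_self_of_subset_right
    intro p hp
    rw [Set.mem_univ_pi] at hp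
    exact (PatternAux.mem_event_iff hn σ τ (PatternAux.cond_injective hc) hp).2 hc
  -- value when s is injective but the pattern condition fails
  have hinj_zero : ∀ s : Fin k → Fin n, Function.Injective s →
      ¬ PatternAux.cond σ τ s → F s = 0 := by
    intro s hsi hc
    rw [hterm s]
    have : E ∩ Set.pi Set.univ (fun j => PatternAux.cell σ (s j)) = ∅ := by
      ext p
      simp only [Set.mem_inter_iff, Set.mem_empty_iff_false, iff_false, not_and]
      intro hpE hpB
      rw [Set.mem_univ_pi] at hpB
      exact hc ((PatternAux.mem_event_iff hn σ τ hsi hpB).1 hpE)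
    rw [this, measure_empty, mul_zero]
  -- counting
  set T : Finset (Fin k → Fin n) := Finset.univ.filter (fun s => PatternAux.cond σ τ s) with hT
  set J : Finset (Fin k → Fin n) :=
    Finset.univ.filter (fun s => ¬ Function.Injective s) with hJ
  have hTcard : T.card = patternCount τ σ * Nat.factorial k := by
    rw [hT, ← Fintype.card_subtype, ← Nat.card_eq_fintype_card]
    exact PatternAux.card_cond σ τ
  have hJcard : J.card = n ^ k - n.descFactorial k := by
    have h1 : (Finset.univ.filter (fun s : Fin k → Fin n => Function.Injective s)).card
        + J.card = (Finset.univ : Finset (Fin k → Fin n)).card :=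
      Finset.card_filter_add_card_filter_not _
    have h2 : (Finset.univ.filter (fun s : Fin k → Fin n => Function.Injective s)).card
        = n.descFactorial k := by
      rw [← Fintype.card_subtype]
      rw [Fintype.card_congr (Equiv.subtypeInjectiveEquivEmbedding (Fin k) (Fin n))]
      rw [Fintype.card_embedding_eq, Fintype.card_fin, Fintype.card_fin]
    have h3 : (Finset.univ : Finset (Fin k → Fin n)).card = n ^ k := by
      rw [Finset.card_univ, Fintype.card_fun, Fintype.card_fin, Fintype.card_fin]
    omega
  have hdesc_le : n.descFactorial k ≤ n ^ k := Nat.descFactorial_le_pow n k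
  -- the ENNReal bounds
  have hMlb : (↑(patternCount τ σ * Nat.factorial k) : ℝ≥0∞) * w ≤ M := by
    rw [hM]
    calc (↑(patternCount τ σ * Nat.factorial k) : ℝ≥0∞) * w
        = ∑ s ∈ T, F s := by
          rw [Finset.sum_congr rfl (fun s hs => hcond_val s (by
            rw [hT] at hs; exact (Finset.mem_filter.1 hs).2))]
          rw [Finset.sum_const, nsmul_eq_mul, hTcard]
      _ ≤ ∑ s : Fin k → Fin n, F s :=
          Finset.sum_le_sum_of_subset (Finset.filter_subset _ _)
  have hMub : M ≤ (↑(patternCount τ σ * Nat.factorial k) : ℝ≥0∞) * w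
      + (↑(n ^ k - n.descFactorial k) : ℝ≥0∞) * w := by
    rw [hM, ← Finset.sum_filter_add_sum_filter_not Finset.univ
      (fun s => PatternAux.cond σ τ s) F]
    gcongr
    · rw [Finset.sum_congr rfl (fun s hs => hcond_val s ((Finset.mem_filter.1 hs).2)),
        Finset.sum_const, nsmul_eq_mul, hTcard]
    · calc ∑ s ∈ Finset.univ.filter (fun s => ¬ PatternAux.cond σ τ s), F s
          ≤ ∑ s ∈ Finset.univ.filter (fun s => ¬ PatternAux.cond σ τ s),
              (if Function.Injective s then 0 else w) := by
            apply Finset.sum_le_sum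
            intro s hs
            by_cases hsi : Function.Injective s
            · rw [if_pos hsi, hinj_zero s hsi ((Finset.mem_filter.1 hs).2)]
            · rw [if_neg hsi]; exact hub s
        _ ≤ ∑ s : Fin k → Fin n, (if Function.Injective s then 0 else w) :=
            Finset.sum_le_sum_of_subset (Finset.filter_subset _ _)
        _ = ∑ s ∈ J, w := by
            rw [hJ, Finset.sum_filter]
            apply Finset.sum_congr rfl
            intro s _
            by_cases hsi : Function.Injective s <;> simp [hsi]
        _ = (↑(n ^ k - n.descFactorial k) : ℝ≥0∞) * w := by
            rw [Finset.sum_const, nsmul_eq_mul, hJcard]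
  have hfin1 : (↑(patternCount τ σ * Nat.factorial k) : ℝ≥0∞) * w ≠ ⊤ :=
    (ENNReal.mul_lt_top (ENNReal.natCast_ne_top _).lt_top hwne.lt_top).ne
  have hfin2 : (↑(n ^ k - n.descFactorial k) : ℝ≥0∞) * w ≠ ⊤ :=
    (ENNReal.mul_lt_top (ENNReal.natCast_ne_top _).lt_top hwne.lt_top).ne
  have hMne : M ≠ ⊤ := ne_top_of_le_ne_top (ENNReal.add_ne_top.2 ⟨hfin1, hfin2⟩) hMub
  -- pass to the reals
  have hwtoReal : w.toReal = ((n:ℝ)^k)⁻¹ := by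
    rw [hw, ENNReal.toReal_inv, ENNReal.toReal_pow, ENNReal.toReal_natCast n]
  have htoReal : ∀ m : ℕ, ((↑m : ℝ≥0∞) * w).toReal = (m : ℝ) / (n:ℝ)^k := by
    intro m
    rw [ENNReal.toReal_mul, ENNReal.toReal_natCast m, hwtoReal, div_eq_mul_inv]
  have hprob_lb : ((patternCount τ σ * Nat.factorial k : ℕ) : ℝ) / (n:ℝ)^k
      ≤ patternProb τ (permMeasure σ) := by
    rw [hprob, ← htoReal]
    exact ENNReal.toReal_mono hMne hMlb
  have hprob_ub : patternProb τ (permMeasure σ)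
      ≤ ((patternCount τ σ * Nat.factorial k : ℕ) : ℝ) / (n:ℝ)^k
        + ((n ^ k - n.descFactorial k : ℕ) : ℝ) / (n:ℝ)^k := by
    rw [hprob, ← htoReal, ← htoReal, ← ENNReal.toReal_add hfin1 hfin2]
    exact ENNReal.toReal_mono (ENNReal.add_ne_top.2 ⟨hfin1, hfin2⟩) hMub
  -- final real arithmetic
  have haC : patternCount τ σ ≤ n.choose k := by
    have h1 : T.card ≤ (Finset.univ.filter
        (fun s : Fin k → Fin n => Function.Injective s)).card := by
      apply Finset.card_le_card
      intro s hs
      rw [hT, Finset.mem_filter] at hs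
      rw [Finset.mem_filter]
      exact ⟨Finset.mem_univ s, PatternAux.cond_injective hs.2⟩
    have h2 : (Finset.univ.filter (fun s : Fin k → Fin n => Function.Injective s)).card
        = n.descFactorial k := by
      rw [← Fintype.card_subtype]
      rw [Fintype.card_congr (Equiv.subtypeInjectiveEquivEmbedding (Fin k) (Fin n))]
      rw [Fintype.card_embedding_eq, Fintype.card_fin, Fintype.card_fin]
    rw [hTcard, h2, Nat.descFactorial_eq_factorial_mul_choose] at h1
    have := Nat.factorial_pos k
    calc patternCount τ σ = patternCount τ σ * Nat.factorial k / Nat.factorial k := by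
          rw [Nat.mul_div_cancel _ this]
      _ ≤ Nat.factorial k * n.choose k / Nat.factorial k := Nat.div_le_div_right h1
      _ = n.choose k := Nat.mul_div_cancel_left _ this
  -- name the real quantities
  set a : ℝ := (patternCount τ σ : ℝ) with ha
  set C : ℝ := (n.choose k : ℝ) with hCr
  set kf : ℝ := (Nat.factorial k : ℝ) with hkf
  set nk : ℝ := ((n:ℝ))^k with hnk
  set A : ℝ := ((patternCount τ σ * Nat.factorial k : ℕ) : ℝ) / (n:ℝ)^k with hA
  set P : ℝ := ((n ^ k - n.descFactorial k : ℕ) : ℝ) / (n:ℝ)^k with hP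
  have hC0 : 0 < C := by
    rw [hCr]; exact_mod_cast Nat.choose_pos hkn
  have hnk0 : (0:ℝ) < nk := by positivity
  have hdesc_cast : ((n.descFactorial k : ℕ) : ℝ) = kf * C := by
    rw [hkf, hCr, ← Nat.cast_mul, Nat.descFactorial_eq_factorial_mul_choose]
  have hcnt_cast : ((n ^ k - n.descFactorial k : ℕ) : ℝ) = nk - kf * C := by
    rw [Nat.cast_sub hdesc_le, hdesc_cast, hnk, Nat.cast_pow]
  have hA_eq : A = a * kf / nk := by
    rw [hA, Nat.cast_mul, ha, hkf, hnk]
  have hP_eq : P = (nk - kf * C) / nk := by rw [hP, hcnt_cast, hnk]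
  have hD : patternDensity τ σ = a / C := by
    unfold patternDensity
    rw [if_pos hkn]
  have ha0 : 0 ≤ a := by rw [ha]; positivity
  have haC' : a ≤ C := by rw [ha, hCr]; exact_mod_cast haC
  have hD0 : 0 ≤ a / C := by positivity
  have hD1 : a / C ≤ 1 := by
    rw [div_le_one hC0]; exact haC'
  have hkf0 : (0:ℝ) < kf := by rw [hkf]; exact_mod_cast Nat.factorial_pos k
  have hP0 : 0 ≤ P := by
    rw [hP]; positivity
  -- key identity : D - A = D * P
  have hkey : a / C - A = (a / C) * P := by
    rw [hA_eq, hP_eq]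
    field_simp
  -- bound on P
  have hPbound : P ≤ (k.choose 2 : ℝ) / n := by
    rw [hP, div_le_div_iff₀ (by positivity) hn']
    have := PatternAux.sub_desc_mul_le n k
    calc ((n ^ k - n.descFactorial k : ℕ) : ℝ) * n
        = (((n ^ k - n.descFactorial k) * n : ℕ) : ℝ) := by push_cast; ring
      _ ≤ ((k.choose 2 * n ^ k : ℕ) : ℝ) := by exact_mod_cast this
      _ = (k.choose 2 : ℝ) * (n:ℝ)^k := by push_cast; ring
  -- conclude
  have hDP_le : (a / C) * P ≤ P := by nlinarith [hD0, hD1, hP0]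
  have hDP_0 : 0 ≤ (a / C) * P := mul_nonneg hD0 hP0
  have hAband : A ≤ patternProb τ (permMeasure σ) ∧
      patternProb τ (permMeasure σ) ≤ A + P := ⟨hprob_lb, hprob_ub⟩
  obtain ⟨hb1, hb2⟩ := hAband
  rw [hD, abs_le]
  constructor
  · linarith [hPbound, hkey, hDP_0]
  · linarith [hPbound, hkey, hDP_le]
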